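/- Define, for θ > 0, z̃₂(θ) = 6(sinh 2θ − 2θ)²/(cosh 2θ − 1)³, w̃₀(θ) = (sinh 2θ − 2θ)(sinh 2θ)/(cosh 2θ − 1)², z̃₄(θ) = 30(sinh 2θ − 2θ)⁴(cosh θ)²/(cosh 2θ − 1)⁶, w̃₂(θ) = 3(sinh 2θ − 2θ)³(cosh θ)/(2(cosh 2θ − 1)⁴ sinh θ), and T(θ) = (sinh 2θ − 2θ)/2. Then for all θ > 0: T(θ)·z̃₄′(θ) = (cosh 2θ − 1)·((5/12)z̃₂²w̃₀ + 4z̃₄ − 5w̃₀z̃₄ − 5z̃₂w̃₂) and T(θ)·w̃₂′(θ) = (cosh 2θ − 1)·(−(1/24)z̃₂² + (1/4)z̃₂w̃₀² − (1/10)z̃₄ + 3w̃₂ − 4w̃₀w̃₂), where all functions are evaluated at θ. Equivalently, the curve (z̃₂, w̃₀, z̃₄, w̃₂) reparametrized by τ = ln T(θ) is a solution of the order n = 2 STV ODE. -/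

import Mathlib

open Real Set Filter

/-- Leading-order density coefficient of the pressureless `k = −1` Friedmann spacetime. -/
noncomputable def z2F (θ : ℝ) : ℝ :=
  6 * (Real.sinh (2 * θ) - 2 * θ) ^ 2 / (Real.cosh (2 * θ) - 1) ^ 3

/-- Leading-order velocity coefficient. -/
noncomputable def w0F (θ : ℝ) : ℝ :=
  (Real.sinh (2 * θ) - 2 * θ) * Real.sinh (2 * θ) / (Real.cosh (2 * θ) - 1) ^ 2

/-- Second-order density coefficient. -/
noncomputable def z4F (θ : ℝ) : ℝ :=
  30 * (Real.sinh (2 * θ) - 2 * θ) ^ 4 * (Real.cosh θ) ^ 2 / (Real.cosh (2 * θ) - 1) ^ 6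

/-- Second-order velocity coefficient. -/
noncomputable def w2F (θ : ℝ) : ℝ :=
  3 * (Real.sinh (2 * θ) - 2 * θ) ^ 3 * Real.cosh θ /
    (2 * (Real.cosh (2 * θ) - 1) ^ 4 * Real.sinh θ)

/-- `T θ = (sinh 2θ − 2θ)/2`. -/
noncomputable def T (θ : ℝ) : ℝ := (Real.sinh (2 * θ) - 2 * θ) / 2

/-! With `cosh 2θ − 1 = 2 sinh² θ` and `sinh 2θ − 2θ = 2 T θ`, every coefficient is a monomial
`T^a cosh^b / sinh^n`, and `T' = 2 sinh²`. Both components of the ODE then become polynomial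
identities in `T θ`, `sinh θ`, `cosh θ` modulo `cosh² = sinh² + 1`. -/

lemma Real.cosh_two_mul_sub_one (x : ℝ) : cosh (2 * x) - 1 = 2 * sinh x ^ 2 := by
  rw [cosh_two_mul, cosh_sq]; ring

lemma T_eq (θ : ℝ) : T θ = sinh θ * cosh θ - θ := by
  rw [T, sinh_two_mul]; ring

lemma z2F_eq (θ : ℝ) : z2F θ = 3 * T θ ^ 2 / sinh θ ^ 6 := by
  rw [z2F, cosh_two_mul_sub_one, sinh_two_mul, T_eq]; ring

lemma w0F_eq {θ : ℝ} (hθ : sinh θ ≠ 0) : w0F θ = T θ * cosh θ / sinh θ ^ 3 := by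
  rw [w0F, cosh_two_mul_sub_one, sinh_two_mul, T_eq]; field_simp

lemma z4F_eq (θ : ℝ) : z4F θ = 15 / 2 * T θ ^ 4 * cosh θ ^ 2 / sinh θ ^ 12 := by
  rw [z4F, cosh_two_mul_sub_one, sinh_two_mul, T_eq]; ring

lemma w2F_eq (θ : ℝ) : w2F θ = 3 / 4 * T θ ^ 3 * cosh θ / sinh θ ^ 9 := by
  rw [w2F, cosh_two_mul_sub_one, sinh_two_mul, T_eq]; ring

lemma hasDerivAt_T (θ : ℝ) : HasDerivAt T (2 * sinh θ ^ 2) θ := by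
  rw [show T = fun x => sinh x * cosh x - x from funext T_eq]
  refine (((hasDerivAt_sinh θ).mul (hasDerivAt_cosh θ)).sub (hasDerivAt_id θ)).congr_deriv ?_
  linear_combination cosh_sq θ

lemma hasDerivAt_z4F {θ : ℝ} (hθ : sinh θ ≠ 0) :
    HasDerivAt z4F (15 * T θ ^ 3 * cosh θ *
      (4 * sinh θ ^ 3 * cosh θ + T θ * sinh θ ^ 2 - 6 * T θ * cosh θ ^ 2) / sinh θ ^ 13) θ := by
  rw [show z4F = fun x => 15 / 2 * T x ^ 4 * cosh x ^ 2 / sinh x ^ 12 from funext z4F_eq]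
  refine (((((hasDerivAt_T θ).pow 4).const_mul (15 / 2)).mul ((hasDerivAt_cosh θ).pow 2)).div
    ((hasDerivAt_sinh θ).pow 12) (pow_ne_zero 12 hθ)).congr_deriv ?_
  simp only [Pi.mul_apply, Pi.pow_apply]
  field_simp
  ring

lemma hasDerivAt_w2F {θ : ℝ} (hθ : sinh θ ≠ 0) :
    HasDerivAt w2F (3 / 4 * T θ ^ 2 *
      (6 * sinh θ ^ 3 * cosh θ + T θ * sinh θ ^ 2 - 9 * T θ * cosh θ ^ 2) / sinh θ ^ 10) θ := by
  rw [show w2F = fun x => 3 / 4 * T x ^ 3 * cosh x / sinh x ^ 9 from funext w2F_eq]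
  refine (((((hasDerivAt_T θ).pow 3).const_mul (3 / 4)).mul (hasDerivAt_cosh θ)).div
    ((hasDerivAt_sinh θ).pow 9) (pow_ne_zero 9 hθ)).congr_deriv ?_
  simp only [Pi.mul_apply, Pi.pow_apply]
  field_simp
  ring

/-- The `k = −1` Friedmann curve solves the order `n = 2` STV ODE (in `τ = ln T θ`). -/
theorem k_neg_orbit_solves_STV_ODE_order_two (θ : ℝ) (hθ : 0 < θ) :
    T θ * deriv z4F θ =
      (Real.cosh (2 * θ) - 1) *
        ((5 / 12) * (z2F θ) ^ 2 * w0F θ + 4 * z4F θ - 5 * w0F θ * z4F θ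
          - 5 * z2F θ * w2F θ) ∧
    T θ * deriv w2F θ =
      (Real.cosh (2 * θ) - 1) *
        (-(1 / 24) * (z2F θ) ^ 2 + (1 / 4) * z2F θ * (w0F θ) ^ 2
          - (1 / 10) * z4F θ + 3 * w2F θ - 4 * w0F θ * w2F θ) := by
  have hs : sinh θ ≠ 0 := (sinh_pos_iff.2 hθ).ne'
  rw [(hasDerivAt_z4F hs).deriv, (hasDerivAt_w2F hs).deriv, cosh_two_mul_sub_one,
    z2F_eq, w0F_eq hs, z4F_eq, w2F_eq]
  constructor
  · field_simp
    linear_combination (-720 * T θ ^ 5) * cosh_sq θ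
  · field_simp
    linear_combination (-720 * T θ ^ 4) * cosh_sq θ
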